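/- arXiv:1910.06146 — 4 statements merged into one kernel-verified Lean document; each statement's English description precedes it below -/
import Mathlib

section
/- Let A ⊂ ℝ^d be a compact set whose boundary ∂A is connected, and let B be any set with ∂A ⊆ B ⊆ A. Then B + B = A + A. -/
open Pointwise

theorem stmt7 {d : ℕ} (A B : Set (Fin d → ℝ)) (hA : IsCompact A)
    (hconn : IsConnected (frontier A)) (h1 : frontier A ⊆ B) (h2 : B ⊆ A) :
    B + B = A + A := by
  have hAcl : IsClosed A := hA.isClosed
  apply Set.Subset.antisymm (Set.add_subset_add h2 h2)
  rintro s ⟨a, ha, a', ha', rfl⟩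
  obtain ⟨z, hz⟩ := hconn.nonempty
  -- the space is nontrivial
  have hAne : A.Nonempty := ⟨z, by
    have := hz.1
    rwa [hAcl.closure_eq] at this⟩
  have hAcne : Aᶜ.Nonempty := by
    by_contra h
    rw [Set.not_nonempty_iff_eq_empty, Set.compl_empty_iff] at h
    rw [h, frontier_univ] at hz
    exact hz
  have hnt : Nontrivial (Fin d → ℝ) := by
    obtain ⟨p, hp⟩ := hAne
    obtain ⟨q, hq⟩ := hAcne
    exact ⟨p, q, fun h => hq (h ▸ hp)⟩
  set s : Fin d → ℝ := a + a' with hs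
  have hcont : Continuous (fun x : Fin d → ℝ => s - x) :=
    continuous_const.sub continuous_id
  -- key claim: there is a boundary point x with s - x also on the boundary
  have key : ∃ x ∈ frontier A, s - x ∈ frontier A := by
    by_contra hcon
    push_neg at hcon
    set u : Set (Fin d → ℝ) := (fun x => s - x) ⁻¹' interior A with hu
    set v : Set (Fin d → ℝ) := (fun x => s - x) ⁻¹' Aᶜ with hv
    have huo : IsOpen u := hcont.isOpen_preimage _ isOpen_interior
    have hvo : IsOpen v := hcont.isOpen_preimage _ hAcl.isOpen_compl
    have hdisj : Disjoint u v := by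
      rw [Set.disjoint_left]
      intro x hxu hxv
      exact hxv (interior_subset hxu)
    have hcover : frontier A ⊆ u ∪ v := by
      intro x hx
      by_cases hmem : s - x ∈ A
      · left
        have : s - x ∈ A \ frontier A := ⟨hmem, hcon x hx⟩
        rwa [self_diff_frontier] at this
      · exact Or.inr hmem
    have hfr : frontier A = A \ interior A := by
      rw [frontier, hAcl.closure_eq]
    rcases hconn.isPreconnected.subset_or_subset huo hvo hdisj hcover with hE | hF
    · -- Case E: ∀ x ∈ ∂A, s - x ∈ interior A; A ∪ (s - A) is clopen
      set D : Set (Fin d → ℝ) := A ∪ ((fun x => s - x) ⁻¹' A) with hD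
      have hDeq : D = interior A ∪ u := by
        apply Set.Subset.antisymm
        · rintro x (hxA | hxP)
          · by_cases hi : x ∈ interior A
            · exact Or.inl hi
            · exact Or.inr (hE (hfr ▸ ⟨hxA, hi⟩))
          · by_cases hi : s - x ∈ interior A
            · exact Or.inr hi
            · left
              have hfr2 : s - x ∈ frontier A := hfr ▸ ⟨hxP, hi⟩
              have := hE hfr2
              rw [hu, Set.mem_preimage, sub_sub_cancel] at this
              exact this
        · rintro x (hxA | hxP)
          · exact Or.inl (interior_subset hxA)
          · have hx' : s - x ∈ interior A := hxP
            exact Or.inr (Set.mem_preimage.mpr (interior_subset hx'))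
      have hDopen : IsOpen D := hDeq ▸ isOpen_interior.union huo
      have hDclosed : IsClosed D := hAcl.union (hAcl.preimage hcont)
      have hDne : D.Nonempty := ⟨a, Or.inl ha⟩
      have hDuniv : D = Set.univ := (IsClopen.eq_univ ⟨hDclosed, hDopen⟩ hDne)
      have hDcompact : IsCompact D := by
        apply hA.union
        exact (Homeomorph.subLeft s).isCompact_preimage.mpr hA
      rw [hDuniv] at hDcompact
      exact noncompact_univ (Fin d → ℝ) hDcompact
    · -- Case F: ∀ x ∈ ∂A, s - x ∉ A; A ∩ (s - A) is clopen
      set C : Set (Fin d → ℝ) := A ∩ ((fun x => s - x) ⁻¹' A) with hC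
      have hCeq : C = interior A ∩ u := by
        apply Set.Subset.antisymm
        · rintro x ⟨hxA, hxP⟩
          constructor
          · by_contra hi
            exact (hF (hfr ▸ ⟨hxA, hi⟩)) hxP
          · by_contra hi
            have hfr2 : s - x ∈ frontier A := hfr ▸ ⟨hxP, hi⟩
            have := hF hfr2
            rw [hv, Set.mem_preimage, sub_sub_cancel] at this
            exact this hxA
        · rintro x ⟨hxA, hxP⟩
          have hx' : s - x ∈ interior A := hxP
          exact ⟨interior_subset hxA, Set.mem_preimage.mpr (interior_subset hx')⟩
      have hCopen : IsOpen C := hCeq ▸ isOpen_interior.inter huo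
      have hCclosed : IsClosed C := hAcl.inter (hAcl.preimage hcont)
      have hCne : C.Nonempty := ⟨a, ha, by simpa [hs] using ha'⟩
      have hCuniv : C = Set.univ := IsClopen.eq_univ ⟨hCclosed, hCopen⟩ hCne
      have hAuniv : A = Set.univ := Set.eq_univ_of_univ_subset
        (hCuniv ▸ Set.inter_subset_left)
      rw [hAuniv, frontier_univ] at hz
      exact hz
  obtain ⟨x, hx1, hx2⟩ := key
  exact ⟨x, h1 hx1, s - x, h1 hx2, by simp [hs]⟩
end

section
/- If A ⊂ ℝ^d is a compact set with connected boundary, then A + A = A + ∂A = ∂A + ∂A, and consequently A[k] = (∂A)[k] for every integer k ≥ 2. -/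
open Pointwise

-- Key "push to boundary" lemma
lemma aux1 {E : Type*} [NormedAddCommGroup E] [NormedSpace ℝ E] {A : Set E}
    (hA : IsCompact A) {a b u : E} (ha : a ∈ A) (hb : b ∈ A) (hu : u ≠ 0) :
    ∃ t : ℝ, 0 ≤ t ∧ a - t • u ∈ A ∧ b + t • u ∈ A ∧
      (a - t • u ∈ frontier A ∨ b + t • u ∈ frontier A) := by
  obtain ⟨R, hR⟩ := (hA.isBounded).exists_norm_le
  set S : Set ℝ := {t | 0 ≤ t ∧ a - t • u ∈ A ∧ b + t • u ∈ A} with hS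
  have hc1 : Continuous fun t : ℝ => a - t • u :=
    continuous_const.sub (continuous_id.smul continuous_const)
  have hc2 : Continuous fun t : ℝ => b + t • u :=
    continuous_const.add (continuous_id.smul continuous_const)
  have hSclosed : IsClosed S := by
    have : S = {t : ℝ | 0 ≤ t} ∩ ((fun t : ℝ => a - t • u) ⁻¹' A ∩ (fun t : ℝ => b + t • u) ⁻¹' A) := by
      ext t; simp [hS, Set.mem_setOf_eq, and_assoc]
    rw [this]
    exact (isClosed_Ici.inter ((hA.isClosed.preimage hc1).inter (hA.isClosed.preimage hc2)))
  have hSsub : S ⊆ Set.Icc 0 ((R + ‖b‖) / ‖u‖) := by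
    intro t ht
    obtain ⟨ht0, _, htb⟩ := ht
    refine ⟨ht0, ?_⟩
    have h1 : ‖t • u‖ ≤ R + ‖b‖ := by
      have := hR _ htb
      have heq : t • u = (b + t • u) - b := by abel
      rw [heq]
      calc ‖(b + t • u) - b‖ ≤ ‖b + t • u‖ + ‖b‖ := norm_sub_le _ _
        _ ≤ R + ‖b‖ := by linarith
    rw [norm_smul, Real.norm_eq_abs, abs_of_nonneg ht0] at h1
    exact (le_div_iff₀ (norm_pos_iff.mpr hu)).mpr h1
  have hScompact : IsCompact S := (isCompact_Icc).of_isClosed_subset hSclosed hSsub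
  have hS0 : (0:ℝ) ∈ S := by simp [hS, ha, hb]
  obtain ⟨t, htS, htmax⟩ := hScompact.exists_isGreatest ⟨0, hS0⟩
  obtain ⟨ht0, hta, htb⟩ := htS
  refine ⟨t, ht0, hta, htb, ?_⟩
  by_contra h
  push_neg at h
  obtain ⟨h1, h2⟩ := h
  have hfr : frontier A = A \ interior A := hA.isClosed.frontier_eq
  have hia : a - t • u ∈ interior A := by
    rcases (em (a - t • u ∈ interior A)) with h | h
    · exact h
    · exact absurd (hfr ▸ ⟨hta, h⟩) h1
  have hib : b + t • u ∈ interior A := by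
    rcases (em (b + t • u ∈ interior A)) with h | h
    · exact h
    · exact absurd (hfr ▸ ⟨htb, h⟩) h2
  set U : Set ℝ := (fun t : ℝ => a - t • u) ⁻¹' interior A ∩ (fun t : ℝ => b + t • u) ⁻¹' interior A
  have hUopen : IsOpen U := (isOpen_interior.preimage hc1).inter (isOpen_interior.preimage hc2)
  have htU : t ∈ U := ⟨hia, hib⟩
  obtain ⟨ε, hε, hball⟩ := Metric.isOpen_iff.mp hUopen t htU
  have ht' : t + ε / 2 ∈ U := hball (by rw [Metric.mem_ball, Real.dist_eq, show t + ε/2 - t = ε/2 by ring, abs_of_pos (by linarith)]; linarith)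
  have : t + ε / 2 ∈ S := ⟨by linarith, interior_subset ht'.1, interior_subset ht'.2⟩
  have := htmax this
  linarith

-- Farthest point: an interior point can't maximize ‖2•x - s‖ over A
lemma auxF {E : Type*} [NormedAddCommGroup E] [NormedSpace ℝ E] [Nontrivial E] {A : Set E}
    {y s : E} (hy : y ∈ interior A) :
    ∃ y' ∈ A, ‖2 • y - s‖ < ‖2 • y' - s‖ := by
  obtain ⟨ε, hε, hball⟩ := Metric.isOpen_iff.mp isOpen_interior y hy
  set v := 2 • y - s with hv
  by_cases hv0 : v = 0
  · obtain ⟨w, hw⟩ := exists_ne (0 : E)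
    have hwn : (0:ℝ) < ‖w‖ := norm_pos_iff.mpr hw
    set y' := y + (ε / (2 * ‖w‖)) • w with hy'
    have hδ : (0:ℝ) < ε / (2 * ‖w‖) := by positivity
    have hmem : y' ∈ Metric.ball y ε := by
      rw [Metric.mem_ball, dist_eq_norm, hy']
      have : y + (ε / (2 * ‖w‖)) • w - y = (ε / (2 * ‖w‖)) • w := by abel
      rw [this, norm_smul, Real.norm_eq_abs, abs_of_pos hδ]
      rw [div_mul_eq_mul_div, mul_comm]
      rw [div_lt_iff₀ (by positivity)]
      nlinarith
    refine ⟨y', interior_subset (hball hmem), ?_⟩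
    have : 2 • y' - s = v + (2 * (ε / (2 * ‖w‖))) • w := by
      rw [hy', hv]; module
    rw [this, hv0, zero_add, norm_smul, norm_zero, Real.norm_eq_abs,
      abs_of_pos (by positivity : (0:ℝ) < 2 * (ε / (2 * ‖w‖)))]
    positivity
  · have hvn : (0:ℝ) < ‖v‖ := norm_pos_iff.mpr hv0
    set δ := ε / (2 * ‖v‖) with hδdef
    have hδ : (0:ℝ) < δ := by positivity
    set y' := y + δ • v with hy'
    have hmem : y' ∈ Metric.ball y ε := by
      rw [Metric.mem_ball, dist_eq_norm, hy']
      have : y + δ • v - y = δ • v := by abel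
      rw [this, norm_smul, Real.norm_eq_abs, abs_of_pos hδ, hδdef]
      rw [div_mul_eq_mul_div, mul_comm]
      rw [div_lt_iff₀ (by positivity)]
      nlinarith
    refine ⟨y', interior_subset (hball hmem), ?_⟩
    have h2 : 2 • y' - s = (1 + 2 * δ) • v := by
      rw [hy', hv]; module
    rw [h2, norm_smul, Real.norm_eq_abs, abs_of_pos (by linarith)]
    nlinarith

lemma aux2 {E : Type*} [NormedAddCommGroup E] [NormedSpace ℝ E] [Nontrivial E] {A : Set E}
    (hA : IsCompact A) (hconn : IsConnected (frontier A)) {a c : E}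
    (ha : a ∈ A) (hc : c ∈ frontier A) :
    ∃ x ∈ frontier A, ∃ y ∈ frontier A, x + y = a + c := by
  have hfr : frontier A = A \ interior A := hA.isClosed.frontier_eq
  by_cases ha' : a ∈ frontier A
  · exact ⟨a, ha', c, hc, rfl⟩
  have hai : a ∈ interior A := by
    rcases em (a ∈ interior A) with h | h
    · exact h
    · exact absurd (hfr ▸ ⟨ha, h⟩) ha'
  by_contra hcon
  push_neg at hcon
  -- hcon : ∀ x ∈ frontier A, ∀ y ∈ frontier A, x + y ≠ a + c
  have hnotF : ∀ x ∈ frontier A, a + c - x ∉ frontier A := by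
    intro x hx hmem
    exact hcon x hx (a + c - x) hmem (by abel)
  have hcont : Continuous fun x : E => a + c - x := continuous_const.sub continuous_id
  set U : Set E := (fun x : E => a + c - x) ⁻¹' interior A with hU
  set V : Set E := (fun x : E => a + c - x) ⁻¹' Aᶜ with hV
  have hUopen : IsOpen U := isOpen_interior.preimage hcont
  have hVopen : IsOpen V := (hA.isClosed.isOpen_compl).preimage hcont
  have hcover : frontier A ⊆ U ∪ V := by
    intro x hx
    rcases em (a + c - x ∈ A) with h | h
    · left
      rcases em (a + c - x ∈ interior A) with h' | h'
      · exact h'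
      · exact absurd (hfr ▸ ⟨h, h'⟩) (hnotF x hx)
    · right; exact h
  have hUne : (frontier A ∩ U).Nonempty := ⟨c, hc, by simp [hU]; simpa using hai⟩
  have hdisj : frontier A ∩ (U ∩ V) = ∅ := by
    ext x
    simp only [Set.mem_inter_iff, Set.mem_empty_iff_false, iff_false]
    rintro ⟨-, hxU, hxV⟩
    exact hxV (interior_subset hxU)
  have hVempty : frontier A ∩ V = ∅ := by
    by_contra hne
    have := hconn.isPreconnected U V hUopen hVopen hcover hUne
      (Set.nonempty_iff_ne_empty.mpr hne)
    rw [hdisj] at this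
    exact Set.not_nonempty_empty this
  have hKey : ∀ x ∈ frontier A, a + c - x ∈ interior A := by
    intro x hx
    rcases hcover hx with h | h
    · exact h
    · exfalso
      have hxx : x ∈ frontier A ∩ V := ⟨hx, h⟩
      rw [hVempty] at hxx
      exact Set.notMem_empty x hxx
  -- farthest point argument
  have hgcont : Continuous fun x : E => ‖2 • x - (a + c)‖ :=
    ((continuous_const_smul (2:ℕ)).sub continuous_const).norm
  obtain ⟨y₀, hy₀A, hy₀max⟩ := hA.exists_isMaxOn ⟨a, ha⟩ hgcont.continuousOn
  have hy₀fr : y₀ ∈ frontier A := by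
    rcases em (y₀ ∈ interior A) with h | h
    · obtain ⟨y', hy'A, hy'⟩ := auxF (A := A) (s := a + c) h
      exact absurd (hy₀max hy'A) (by simpa using not_le.mpr hy')
    · exact hfr ▸ ⟨hy₀A, h⟩
  have hw : a + c - y₀ ∈ interior A := hKey y₀ hy₀fr
  obtain ⟨y', hy'A, hy'⟩ := auxF (A := A) (s := a + c) hw
  have heq : ‖2 • (a + c - y₀) - (a + c)‖ = ‖2 • y₀ - (a + c)‖ := by
    have : 2 • (a + c - y₀) - (a + c) = -(2 • y₀ - (a + c)) := by module
    rw [this, norm_neg]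
  rw [heq] at hy'
  exact absurd (hy₀max hy'A) (by simpa using not_le.mpr hy')

theorem stmt8 {d : ℕ} (A : Set (Fin d → ℝ)) (hA : IsCompact A)
    (hconn : IsConnected (frontier A)) :
    A + A = A + frontier A ∧ A + A = frontier A + frontier A ∧
      ∀ k : ℕ, 2 ≤ k →
        (∑ _i ∈ Finset.range k, A) = ∑ _i ∈ Finset.range k, frontier A := by
  rcases subsingleton_or_nontrivial (Fin d → ℝ) with hsub | hnt
  · -- subsingleton: frontier is empty, contradicting connectedness
    exfalso
    have hopen : IsOpen A := by
      rcases A.eq_empty_or_nonempty with h | ⟨x, hx⟩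
      · rw [h]; exact isOpen_empty
      · have : A = Set.univ := by
          ext y; simp only [Set.mem_univ, iff_true]
          rwa [Subsingleton.elim y x]
        rw [this]; exact isOpen_univ
    have : frontier A = ∅ := by
      rw [hA.isClosed.frontier_eq, hopen.interior_eq, Set.diff_self]
    obtain ⟨x, hx⟩ := hconn.nonempty
    rw [this] at hx
    exact Set.notMem_empty x hx
  · obtain ⟨u, hu⟩ := exists_ne (0 : Fin d → ℝ)
    have hFA : frontier A ⊆ A := hA.isClosed.frontier_subset
    have h1 : A + A = A + frontier A := by
      apply Set.Subset.antisymm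
      · rintro x ⟨a, ha, b, hb, rfl⟩
        obtain ⟨t, ht0, hta, htb, hor⟩ := aux1 hA ha hb hu
        rcases hor with h | h
        · exact ⟨b + t • u, htb, a - t • u, h, by abel_nf⟩
        · exact ⟨a - t • u, hta, b + t • u, h, by abel_nf⟩
      · rintro x ⟨a, ha, b, hb, rfl⟩
        exact ⟨a, ha, b, hFA hb, rfl⟩
    have h2 : A + frontier A = frontier A + frontier A := by
      apply Set.Subset.antisymm
      · rintro x ⟨a, ha, c, hc, rfl⟩
        obtain ⟨p, hp, q, hq, hpq⟩ := aux2 hA hconn ha hc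
        exact ⟨p, hp, q, hq, hpq⟩
      · rintro x ⟨a, ha, b, hb, rfl⟩
        exact ⟨a, hFA ha, b, hb, rfl⟩
    refine ⟨h1, h1.trans h2, ?_⟩
    have key : ∀ m : ℕ, (∑ _i ∈ Finset.range (m + 2), A)
        = ∑ _i ∈ Finset.range (m + 2), frontier A := by
      intro m
      induction m with
      | zero =>
        simp only [Finset.sum_range_succ, Finset.sum_range_zero, zero_add]
        rw [h1, h2]
      | succ n ih =>
        rw [Finset.sum_range_succ, ih, Finset.sum_range_succ (n := n + 2),
          Finset.sum_range_succ (n := n + 1), add_assoc, add_assoc]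
        congr 1
        rw [add_comm (frontier A) A, h2]
    intro k hk
    obtain ⟨m, rfl⟩ := Nat.exists_eq_add_of_le hk
    rw [show 2 + m = m + 2 by ring]
    exact key m
end

section
/- Let A ⊂ ℝ^d be a compact set with connected boundary and let p ∈ (1/2)(A + A). Then there exists q ∈ ∂A such that the reflection of q about p, namely 2p − q, also lies in ∂A. -/
open Pointwise

theorem stmt9 {d : ℕ} (A : Set (Fin d → ℝ)) (hA : IsCompact A)
    (hconn : IsConnected (frontier A)) (p : Fin d → ℝ)
    (hp : p ∈ ((1 : ℝ) / 2) • (A + A)) :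
    ∃ q ∈ frontier A, (2 : ℝ) • p - q ∈ frontier A := by
  have hne : (frontier A).Nonempty := hconn.nonempty
  rcases subsingleton_or_nontrivial (Fin d → ℝ) with hsub | hnt
  · exfalso
    rcases A.eq_empty_or_nonempty with rfl | hAne
    · simp at hne
    · rw [hAne.eq_univ] at hne
      simp at hne
  by_contra hcon
  push_neg at hcon
  -- extract midpoint data
  obtain ⟨x, hxmem, hxp⟩ := hp
  obtain ⟨a, ha, b, hb, rfl⟩ := hxmem
  have h2p : (2 : ℝ) • p = a + b := by
    rw [← hxp, smul_smul]; norm_num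
  -- the point reflection about p
  set σ : (Fin d → ℝ) ≃ₜ (Fin d → ℝ) := Homeomorph.subLeft ((2 : ℝ) • p) with hσ
  have hσdef : ∀ x, σ x = (2 : ℝ) • p - x := fun x => rfl
  have hσinv : ∀ x, σ (σ x) = x := fun x => by simp [hσdef, sub_sub_cancel]
  set B : Set (Fin d → ℝ) := σ '' A with hB
  have haB : a ∈ B := ⟨b, hb, by rw [hσdef, h2p]; abel⟩
  have hBfr : frontier B = σ '' frontier A := (σ.image_frontier A).symm
  -- frontiers are disjoint
  have hdisj : frontier A ∩ frontier B = ∅ := by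
    ext q
    simp only [Set.mem_inter_iff, Set.mem_empty_iff_false, iff_false, not_and]
    intro hq1 hq2
    rw [hBfr] at hq2
    obtain ⟨q', hq', hqq⟩ := hq2
    exact hcon q' hq' (by rw [show (2:ℝ) • p - q' = σ q' from (hσdef q').symm, hqq]; exact hq1)
  have hfrB_sub : frontier B ⊆ interior A ∪ (closure A)ᶜ := by
    intro x hx
    have hxA : x ∉ frontier A := fun h => (Set.eq_empty_iff_forall_notMem.mp hdisj x) ⟨h, hx⟩
    rw [frontier, Set.mem_diff, not_and_or, not_not] at hxA
    rcases hxA with h | h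
    · exact Or.inr h
    · exact Or.inl h
  have hconnB : IsConnected (frontier B) := by
    rw [hBfr]; exact hconn.image σ σ.continuous.continuousOn
  have hcases := hconnB.isPreconnected.subset_or_subset isOpen_interior
    (isClosed_closure (s := A)).isOpen_compl
    (Set.disjoint_compl_right_iff_subset.mpr
      (interior_subset.trans subset_closure)) hfrB_sub
  rcases hcases with hc1 | hc2
  · -- frontier B ⊆ interior A ; deduce frontier A ⊆ interior B
    have hfa : frontier A ⊆ interior B := by
      intro q hq
      have : σ q ∈ frontier B := hBfr ▸ Set.mem_image_of_mem σ hq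
      have h1 : σ q ∈ interior A := hc1 this
      have h2 : σ (σ q) ∈ σ '' interior A := Set.mem_image_of_mem σ h1
      rw [hσinv, σ.image_interior] at h2
      exact h2
    -- K = A ∪ B is clopen nonempty
    set K : Set (Fin d → ℝ) := A ∪ B with hK
    have hKcl : IsCompact K := hA.union (hA.image σ.continuous)
    have hclA : closure A = A := hA.isClosed.closure_eq
    have hclB : closure B = B := (hA.image σ.continuous).isClosed.closure_eq
    have hfrK : frontier K = ∅ := by
      rw [Set.eq_empty_iff_forall_notMem]
      intro y hy
      have hy' := frontier_union_subset A B hy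
      have hyint : y ∈ interior K := by
        rcases hy' with ⟨h, -⟩ | ⟨-, h⟩
        · exact interior_mono Set.subset_union_right (hfa h)
        · exact interior_mono Set.subset_union_left (hc1 h)
      exact hy.2 hyint
    have hKuniv : K = Set.univ := by
      rcases frontier_eq_empty_iff.mp hfrK with h | h
      · have : a ∈ K := Set.mem_union_left _ ha
        rw [h] at this; exact this.elim
      · exact h
    exact hKcl.ne_univ hKuniv
  · -- frontier B ⊆ (closure A)ᶜ ; deduce frontier A ⊆ (closure B)ᶜ
    have hfa : frontier A ⊆ (closure B)ᶜ := by
      intro q hq hqB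
      have h2 : σ q ∈ σ '' closure B := Set.mem_image_of_mem σ hqB
      have : σ '' closure B = closure A := by
        rw [σ.image_closure, hB, ← Set.image_comp]
        have : σ ∘ σ = id := funext hσinv
        rw [this, Set.image_id]
      rw [this] at h2
      have hσfr : σ q ∈ frontier B := hBfr ▸ Set.mem_image_of_mem σ hq
      exact hc2 hσfr h2
    set K : Set (Fin d → ℝ) := A ∩ B with hK
    have hKcl : IsCompact K := hA.inter_right (hA.image σ.continuous).isClosed
    have hfrK : frontier K = ∅ := by
      rw [Set.eq_empty_iff_forall_notMem]
      intro y hy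
      have hy' := frontier_inter_subset A B hy
      rcases hy' with ⟨h1, h2⟩ | ⟨h1, h2⟩
      · exact hfa h1 h2
      · exact hc2 h2 h1
    have hKuniv : K = Set.univ := by
      rcases frontier_eq_empty_iff.mp hfrK with h | h
      · have : a ∈ K := ⟨ha, haB⟩
        rw [h] at this; exact this.elim
      · exact h
    exact hKcl.ne_univ hKuniv
end

section
/- For d = 7, the compact star-shaped sets A₁ = [0,1]⁴ × {0}³, A₂ = {0}⁴ × [0,1]³, and A₃ = ([0,3]⁴ × {0}³) ∪ ({0}⁴ × [0,6]³) in ℝ⁷ satisfy vol(A₁+A₂+A₃)^{1/7} < (1/2)(vol(A₁+A₂)^{1/7} + vol(A₁+A₃)^{1/7} + vol(A₂+A₃)^{1/7}), giving a counterexample to the Bobkov–Madiman–Wang generalized conjecture in ℝ⁷. -/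
open Pointwise MeasureTheory

/-- Box with lower corner 0 and upper corner `u`. -/
def stmt17Box (u : Fin 7 → ℝ) : Set (Fin 7 → ℝ) :=
  Set.pi Set.univ (fun i => Set.Icc 0 (u i))

lemma stmt17Box_meas (u : Fin 7 → ℝ) : MeasurableSet (stmt17Box u) :=
  MeasurableSet.univ_pi (fun _ => measurableSet_Icc)

lemma stmt17Box_add (u v : Fin 7 → ℝ) (hu : ∀ i, 0 ≤ u i) (hv : ∀ i, 0 ≤ v i) :
    stmt17Box u + stmt17Box v = stmt17Box (u + v) := by
  ext x
  constructor
  · rintro ⟨s, hs, t, ht, rfl⟩ i _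
    have : s i + t i ∈ Set.Icc 0 (u i) + Set.Icc 0 (v i) :=
      ⟨s i, hs i trivial, t i, ht i trivial, rfl⟩
    rwa [Set.Icc_add_Icc (hu i) (hv i), zero_add] at this
  · intro hx
    have hx' : ∀ i, x i ∈ Set.Icc 0 (u i) + Set.Icc 0 (v i) := by
      intro i
      rw [Set.Icc_add_Icc (hu i) (hv i), zero_add]
      exact hx i trivial
    choose s hs t ht hst using fun i => hx' i
    refine ⟨s, fun i _ => hs i, t, fun i _ => ht i, ?_⟩
    funext i
    show s i + t i = x i
    simpa using hst i

lemma stmt17Box_inter (u v : Fin 7 → ℝ) :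
    stmt17Box u ∩ stmt17Box v = stmt17Box (fun i => min (u i) (v i)) := by
  rw [stmt17Box, stmt17Box, stmt17Box, ← Set.pi_inter_distrib]
  refine congrArg _ (funext fun i => ?_)
  simp [Set.Icc_inter_Icc]

lemma stmt17Box_vol (u : Fin 7 → ℝ) :
    volume (stmt17Box u) = ∏ i, ENNReal.ofReal (u i) := by
  rw [stmt17Box, MeasureTheory.volume_pi_pi]
  simp [Real.volume_Icc]

lemma stmt17_rpow_lt {x q : ℝ} (hx : 0 ≤ x) (hq : 0 < q) (h : x < q ^ (7 : ℕ)) :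
    x ^ ((1 : ℝ) / 7) < q := by
  by_contra h'
  push_neg at h'
  have h1 : (x ^ ((1 : ℝ) / 7)) ^ (7 : ℕ) = x := by
    rw [← Real.rpow_natCast (x ^ ((1 : ℝ) / 7)) 7, ← Real.rpow_mul hx]
    norm_num
  have := pow_le_pow_left₀ hq.le h' 7
  rw [h1] at this
  linarith

lemma stmt17_lt_rpow {x q : ℝ} (hq : 0 ≤ q) (h : q ^ (7 : ℕ) < x) :
    q < x ^ ((1 : ℝ) / 7) := by
  have h1 : (q ^ (7 : ℕ)) ^ ((1 : ℝ) / 7) = q := by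
    rw [← Real.rpow_natCast q 7, ← Real.rpow_mul hq]
    norm_num
  calc q = (q ^ (7 : ℕ)) ^ ((1 : ℝ) / 7) := h1.symm
    _ < x ^ ((1 : ℝ) / 7) := Real.rpow_lt_rpow (by positivity) h (by norm_num)

theorem stmt17
    (A₁ A₂ A₃ : Set (Fin 7 → ℝ))
    (hA₁ : A₁ = {x : Fin 7 → ℝ | ∀ i : Fin 7,
      if (i : ℕ) < 4 then x i ∈ Set.Icc (0 : ℝ) 1 else x i = 0})
    (hA₂ : A₂ = {x : Fin 7 → ℝ | ∀ i : Fin 7,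
      if (i : ℕ) < 4 then x i = 0 else x i ∈ Set.Icc (0 : ℝ) 1})
    (hA₃ : A₃ = {x : Fin 7 → ℝ | ∀ i : Fin 7,
        if (i : ℕ) < 4 then x i ∈ Set.Icc (0 : ℝ) 3 else x i = 0} ∪
      {x : Fin 7 → ℝ | ∀ i : Fin 7,
        if (i : ℕ) < 4 then x i = 0 else x i ∈ Set.Icc (0 : ℝ) 6}) :
    (volume (A₁ + A₂ + A₃)).toReal ^ ((1 : ℝ) / 7) <
      (1 / 2) * ((volume (A₁ + A₂)).toReal ^ ((1 : ℝ) / 7) +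
        (volume (A₁ + A₃)).toReal ^ ((1 : ℝ) / 7) +
        (volume (A₂ + A₃)).toReal ^ ((1 : ℝ) / 7)) := by
  set u₁ : Fin 7 → ℝ := fun i => if (i : ℕ) < 4 then 1 else 0 with hu₁
  set u₂ : Fin 7 → ℝ := fun i => if (i : ℕ) < 4 then 0 else 1 with hu₂
  set u₃ : Fin 7 → ℝ := fun i => if (i : ℕ) < 4 then 3 else 0 with hu₃
  set v₃ : Fin 7 → ℝ := fun i => if (i : ℕ) < 4 then 0 else 6 with hv₃
  have f0 : ((0 : Fin 7) : ℕ) = 0 := rfl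
  have f1 : ((1 : Fin 7) : ℕ) = 1 := rfl
  have f2 : ((2 : Fin 7) : ℕ) = 2 := rfl
  have f3 : ((3 : Fin 7) : ℕ) = 3 := rfl
  have f4 : ((4 : Fin 7) : ℕ) = 4 := rfl
  have f5 : ((5 : Fin 7) : ℕ) = 5 := rfl
  have f6 : ((6 : Fin 7) : ℕ) = 6 := rfl
  have h₁ : A₁ = stmt17Box u₁ := by
    rw [hA₁]; ext x; simp only [stmt17Box, Set.mem_setOf_eq, Set.mem_pi, Set.mem_univ,
      forall_true_left, hu₁]
    refine forall_congr' fun i => ?_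
    by_cases h : (i : ℕ) < 4 <;> simp [h, le_antisymm_iff, and_comm]
  have h₂ : A₂ = stmt17Box u₂ := by
    rw [hA₂]; ext x; simp only [stmt17Box, Set.mem_setOf_eq, Set.mem_pi, Set.mem_univ,
      forall_true_left, hu₂]
    refine forall_congr' fun i => ?_
    by_cases h : (i : ℕ) < 4 <;> simp [h, le_antisymm_iff, and_comm]
  have h₃ : A₃ = stmt17Box u₃ ∪ stmt17Box v₃ := by
    rw [hA₃]
    congr 1
    · ext x; simp only [stmt17Box, Set.mem_setOf_eq, Set.mem_pi, Set.mem_univ,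
        forall_true_left, hu₃]
      refine forall_congr' fun i => ?_
      by_cases h : (i : ℕ) < 4 <;> simp [h, le_antisymm_iff, and_comm]
    · ext x; simp only [stmt17Box, Set.mem_setOf_eq, Set.mem_pi, Set.mem_univ,
        forall_true_left, hv₃]
      refine forall_congr' fun i => ?_
      by_cases h : (i : ℕ) < 4 <;> simp [h, le_antisymm_iff, and_comm]
  have hu₁0 : ∀ i, 0 ≤ u₁ i := fun i => by simp only [hu₁]; split <;> norm_num
  have hu₂0 : ∀ i, 0 ≤ u₂ i := fun i => by simp only [hu₂]; split <;> norm_num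
  have hu₃0 : ∀ i, 0 ≤ u₃ i := fun i => by simp only [hu₃]; split <;> norm_num
  have hv₃0 : ∀ i, 0 ≤ v₃ i := fun i => by simp only [hv₃]; split <;> norm_num
  have hs12 : A₁ + A₂ = stmt17Box (u₁ + u₂) := by
    rw [h₁, h₂, stmt17Box_add _ _ hu₁0 hu₂0]
  have hs13 : A₁ + A₃ = stmt17Box (u₁ + u₃) ∪ stmt17Box (u₁ + v₃) := by
    rw [h₁, h₃, Set.add_union, stmt17Box_add _ _ hu₁0 hu₃0, stmt17Box_add _ _ hu₁0 hv₃0]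
  have hs23 : A₂ + A₃ = stmt17Box (u₂ + u₃) ∪ stmt17Box (u₂ + v₃) := by
    rw [h₂, h₃, Set.add_union, stmt17Box_add _ _ hu₂0 hu₃0, stmt17Box_add _ _ hu₂0 hv₃0]
  have hs123 : A₁ + A₂ + A₃ = stmt17Box (u₁ + u₂ + u₃) ∪ stmt17Box (u₁ + u₂ + v₃) := by
    rw [hs12, h₃, Set.add_union,
      stmt17Box_add (u₁ + u₂) u₃ (fun i => add_nonneg (hu₁0 i) (hu₂0 i)) hu₃0,
      stmt17Box_add (u₁ + u₂) v₃ (fun i => add_nonneg (hu₁0 i) (hu₂0 i)) hv₃0]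
  have hunion : ∀ a b : Fin 7 → ℝ,
      volume (stmt17Box a ∪ stmt17Box b) + volume (stmt17Box a ∩ stmt17Box b)
        = volume (stmt17Box a) + volume (stmt17Box b) :=
    fun a b => measure_union_add_inter _ (stmt17Box_meas b)
  have vol12 : volume (A₁ + A₂) = 1 := by
    rw [hs12, stmt17Box_vol, Fin.prod_univ_seven]
    norm_num [hu₁, hu₂, ENNReal.ofReal_ofNat, f0, f1, f2, f3, f4, f5, f6]
  have vol13 : volume (A₁ + A₃) = 216 := by
    have h0 : volume (stmt17Box (u₁ + u₃)) = 0 := by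
      rw [stmt17Box_vol, Fin.prod_univ_seven]
      norm_num [hu₁, hu₃, f0, f1, f2, f3, f4, f5, f6]
    have h0' : volume (stmt17Box (u₁ + u₃) ∩ stmt17Box (u₁ + v₃)) = 0 :=
      measure_mono_null Set.inter_subset_left h0
    have hV : volume (stmt17Box (u₁ + v₃)) = 216 := by
      rw [stmt17Box_vol, Fin.prod_univ_seven]
      norm_num [hu₁, hv₃, ENNReal.ofReal_ofNat, f0, f1, f2, f3, f4, f5, f6]
    have h := hunion (u₁ + u₃) (u₁ + v₃)
    rw [h0, h0', hV, zero_add, add_zero] at h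
    rw [hs13, h]
  have vol23 : volume (A₂ + A₃) = 81 := by
    have h0 : volume (stmt17Box (u₂ + v₃)) = 0 := by
      rw [stmt17Box_vol, Fin.prod_univ_seven]
      norm_num [hu₂, hv₃, f0, f1, f2, f3, f4, f5, f6]
    have h0' : volume (stmt17Box (u₂ + u₃) ∩ stmt17Box (u₂ + v₃)) = 0 :=
      measure_mono_null Set.inter_subset_right h0
    have hU : volume (stmt17Box (u₂ + u₃)) = 81 := by
      rw [stmt17Box_vol, Fin.prod_univ_seven]
      norm_num [hu₂, hu₃, ENNReal.ofReal_ofNat, f0, f1, f2, f3, f4, f5, f6]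
    have h := hunion (u₂ + u₃) (u₂ + v₃)
    rw [h0, h0', hU, add_zero, add_zero] at h
    rw [hs23, h]
  have vol123 : volume (A₁ + A₂ + A₃) = 598 := by
    have hI : volume (stmt17Box (u₁ + u₂ + u₃) ∩ stmt17Box (u₁ + u₂ + v₃)) = 1 := by
      rw [stmt17Box_inter, stmt17Box_vol, Fin.prod_univ_seven]
      norm_num [hu₁, hu₂, hu₃, hv₃, ENNReal.ofReal_ofNat, f0, f1, f2, f3, f4, f5, f6]
    have hU : volume (stmt17Box (u₁ + u₂ + u₃)) = 256 := by
      rw [stmt17Box_vol, Fin.prod_univ_seven]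
      norm_num [hu₁, hu₂, hu₃, ENNReal.ofReal_ofNat, f0, f1, f2, f3, f4, f5, f6]
    have hV : volume (stmt17Box (u₁ + u₂ + v₃)) = 343 := by
      rw [stmt17Box_vol, Fin.prod_univ_seven]
      norm_num [hu₁, hu₂, hv₃, ENNReal.ofReal_ofNat, f0, f1, f2, f3, f4, f5, f6]
    have h := hunion (u₁ + u₂ + u₃) (u₁ + u₂ + v₃)
    rw [hI, hU, hV] at h
    rw [hs123]
    have h' : (1 : ENNReal) + volume (stmt17Box (u₁ + u₂ + u₃) ∪ stmt17Box (u₁ + u₂ + v₃))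
        = 1 + 598 := by
      rw [add_comm, h]; norm_num
    exact (ENNReal.add_right_inj (by norm_num)).mp h'
  rw [vol12, vol13, vol23, vol123]
  have t1 : ((1 : ENNReal)).toReal = 1 := by norm_num
  have t2 : ((216 : ENNReal)).toReal = 216 := by norm_num
  have t3 : ((81 : ENNReal)).toReal = 81 := by norm_num
  have t4 : ((598 : ENNReal)).toReal = 598 := by norm_num
  rw [t1, t2, t3, t4, Real.one_rpow]
  have ha : (598 : ℝ) ^ ((1 : ℝ) / 7) < 2.494 :=
    stmt17_rpow_lt (by norm_num) (by norm_num) (by norm_num)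
  have hb : (2.155 : ℝ) < (216 : ℝ) ^ ((1 : ℝ) / 7) :=
    stmt17_lt_rpow (by norm_num) (by norm_num)
  have hc : (1.873 : ℝ) < (81 : ℝ) ^ ((1 : ℝ) / 7) :=
    stmt17_lt_rpow (by norm_num) (by norm_num)
  linarith
end
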